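/- The LDP-FL quantizer with parameters c ∈ ℝ, r > 0, ε > 0 satisfies ε-parameter-based local differential privacy: for all w, w′ ∈ [c−r, c+r] and each output value v ∈ {c − r·α(ε), c + r·α(ε)}, P(Q(w) = v) ≤ e^ε · P(Q(w′) = v). -/

import Mathlib

open Real Set

/-- `α(ε) = (e^ε + 1)/(e^ε − 1)`. -/
noncomputable def alphaFn (ε : ℝ) : ℝ := (Real.exp ε + 1) / (Real.exp ε - 1)

/-- `P(Q(w) = v)` for the LDP-FL quantizer with parameters `c, r, ε` at input `w`:
the value `c + r·α(ε)` occurs with probability `1/2 + (w−c)/(2rα(ε))` and the value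
`c − r·α(ε)` with probability `1/2 − (w−c)/(2rα(ε))`. -/
noncomputable def probQ (c r ε w v : ℝ) : ℝ :=
  if v = c + r * alphaFn ε then 1 / 2 + (w - c) / (2 * r * alphaFn ε)
  else if v = c - r * alphaFn ε then 1 / 2 - (w - c) / (2 * r * alphaFn ε)
  else 0

/-! Both output probabilities have the form `1/2 + x/(2rα)` with `|x| ≤ r`, so their ratio is
at most `(rα + r)/(rα − r) = (α + 1)/(α − 1)`; and `α ↦ (α + 1)/(α − 1)` is an involution,
which sends `α(ε)` back to `e^ε`. -/

lemma one_lt_alphaFn {ε : ℝ} (hε : 0 < ε) : 1 < alphaFn ε := by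
  have hexp : 1 < Real.exp ε := one_lt_exp_iff.mpr hε
  rw [alphaFn, lt_div_iff₀ (by linarith)]
  linarith

lemma alphaFn_ne_zero {ε : ℝ} (hε : ε ≠ 0) : alphaFn ε ≠ 0 :=
  div_ne_zero (by positivity) (sub_ne_zero.mpr (exp_eq_one_iff ε |>.not.mpr hε))

lemma exp_eq_alphaFn_add_one_div_sub_one {ε : ℝ} (hε : ε ≠ 0) :
    Real.exp ε = (alphaFn ε + 1) / (alphaFn ε - 1) := by
  have hexp : Real.exp ε - 1 ≠ 0 := sub_ne_zero.mpr (exp_eq_one_iff ε |>.not.mpr hε)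
  have hsub : alphaFn ε - 1 = 2 / (Real.exp ε - 1) := by
    rw [alphaFn]
    field_simp
    ring
  rw [eq_div_iff (by rw [hsub]; positivity), hsub, alphaFn]
  field_simp
  ring

lemma probQ_add (c r ε w : ℝ) :
    probQ c r ε w (c + r * alphaFn ε) = 1 / 2 + (w - c) / (2 * r * alphaFn ε) :=
  if_pos rfl

lemma probQ_sub (c w : ℝ) {r ε : ℝ} (hr : r ≠ 0) (hε : ε ≠ 0) :
    probQ c r ε w (c - r * alphaFn ε) = 1 / 2 + (c - w) / (2 * r * alphaFn ε) := by
  have hne : c - r * alphaFn ε ≠ c + r * alphaFn ε := by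
    have : r * alphaFn ε ≠ 0 := mul_ne_zero hr (alphaFn_ne_zero hε)
    intro h
    exact this (by linarith)
  rw [probQ, if_neg hne, if_pos rfl]
  ring

lemma half_add_div_le_mul_half_add_div {r α x x' : ℝ} (hr : 0 < r) (hα : 1 < α)
    (hx : x ≤ r) (hx' : -r ≤ x') :
    1 / 2 + x / (2 * r * α) ≤ (α + 1) / (α - 1) * (1 / 2 + x' / (2 * r * α)) := by
  have hrα : 0 < 2 * r * α := by positivity
  have hratio : 0 ≤ (α + 1) / (α - 1) := div_nonneg (by linarith) (by linarith)
  calc 1 / 2 + x / (2 * r * α) ≤ 1 / 2 + r / (2 * r * α) := by gcongr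
    _ = (α + 1) / (α - 1) * (1 / 2 + -r / (2 * r * α)) := by
      field_simp [(by linarith : α - 1 ≠ 0)]
      ring
    _ ≤ (α + 1) / (α - 1) * (1 / 2 + x' / (2 * r * α)) := by gcongr

/-- the LDP-FL quantizer satisfies `ε`-parameter-based local differential privacy:
for all inputs `w, w' ∈ [c−r, c+r]` and each output value `v ∈ {c − r·α(ε), c + r·α(ε)}`,
`P(Q(w) = v) ≤ e^ε · P(Q(w') = v)`. -/
theorem stmt3 (c r ε : ℝ) (hr : 0 < r) (hε : 0 < ε) :
    ∀ w ∈ Icc (c - r) (c + r), ∀ w' ∈ Icc (c - r) (c + r),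
      ∀ v ∈ ({c - r * alphaFn ε, c + r * alphaFn ε} : Set ℝ),
        probQ c r ε w v ≤ Real.exp ε * probQ c r ε w' v := by
  rintro w ⟨hw₁, hw₂⟩ w' ⟨hw₁', hw₂'⟩ v (rfl | rfl)
  all_goals rw [exp_eq_alphaFn_add_one_div_sub_one hε.ne']
  · rw [probQ_sub c w hr.ne' hε.ne', probQ_sub c w' hr.ne' hε.ne']
    exact half_add_div_le_mul_half_add_div hr (one_lt_alphaFn hε) (by linarith) (by linarith)
  · rw [probQ_add, probQ_add]
    exact half_add_div_le_mul_half_add_div hr (one_lt_alphaFn hε) (by linarith) (by linarith)
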